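/- arXiv:2604.20964 — 2 statements merged into one kernel-verified Lean document; each statement's English description precedes it below -/
import Mathlib

section
/- Let φ = (1+√5)/2 and ξ = exp(πi/3). The image of the lattice ℤ[ξ] = ℤ + ℤξ in the torus ℂ/Λ, where Λ = ℤ(φ²+ξ) + ℤξ(φ²+ξ), is dense in ℂ/Λ. Equivalently, the subgroup ℤ[ξ] + Λ is dense in ℂ. -/
/-!
Since `ξ² = ξ - 1`, the group `ℤ[ξ] + Λ` equals `(ℤ + ℤφ²) + (ℤ + ℤφ²)ξ`. As `φ² = φ + 1` is
irrational, `ℤ + ℤφ²` is dense in `ℝ`, and `(x, y) ↦ x + yξ` is a continuous surjection `ℝ² → ℂ`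
because `ξ ∉ ℝ`; it maps the dense set `(ℤ + ℤφ²)²` onto a dense subset of `ℂ`.
-/

open Complex Real

theorem Real.irrational_goldenRatio_sq : Irrational (goldenRatio ^ 2) := by
  simpa [goldenRatio_sq] using goldenRatio_irrational.add_natCast 1

theorem Complex.exp_pi_mul_I_div_three_im_ne_zero : (exp (π * I / 3)).im ≠ 0 := by
  simp [exp_im, mul_div_right_comm]

theorem Complex.sq_eq_sub_one_of_pow_three_eq_neg_one {ω : ℂ} (h3 : ω ^ 3 = -1) (h1 : ω ≠ -1) :
    ω ^ 2 = ω - 1 := by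
  have hfactor : (ω + 1) * (ω ^ 2 - ω + 1) = 0 := by linear_combination h3
  have hquad := (mul_eq_zero.1 hfactor).resolve_left fun h => h1 (eq_neg_of_add_eq_zero_left h)
  linear_combination hquad

theorem Complex.exp_pi_mul_I_div_three_sq :
    exp (π * I / 3) ^ 2 = exp (π * I / 3) - 1 := by
  refine sq_eq_sub_one_of_pow_three_eq_neg_one ?_ fun h => ?_
  · rw [← exp_nat_mul]; push_cast
    rw [mul_div_cancel₀ _ three_ne_zero, exp_pi_mul_I]
  · exact exp_pi_mul_I_div_three_im_ne_zero (by simp [h])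

theorem Complex.dense_ofReal_add_ofReal_mul {S : Set ℝ} (hS : Dense S) {ω : ℂ} (hω : ω.im ≠ 0) :
    Dense {z : ℂ | ∃ x ∈ S, ∃ y ∈ S, z = x + y * ω} := by
  have hsurj : Function.Surjective fun p : ℝ × ℝ => (p.1 : ℂ) + p.2 * ω := fun z =>
    ⟨(z.re - z.im / ω.im * ω.re, z.im / ω.im), Complex.ext (by simp) (by simp [hω])⟩
  have hcont : Continuous fun p : ℝ × ℝ => (p.1 : ℂ) + p.2 * ω := by fun_prop
  convert hsurj.denseRange.dense_image hcont (hS.prod hS) using 1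
  ext z
  simp [eq_comm, and_assoc]

theorem Zxi_plus_lattice_dense :
    let φ : ℝ := (1 + Real.sqrt 5) / 2
    let ξ : ℂ := Complex.exp (Real.pi * Complex.I / 3)
    let u : ℂ := (φ : ℂ) ^ 2 + ξ
    let v : ℂ := ξ * u
    Dense {z : ℂ | ∃ a b m n : ℤ,
      z = (a : ℂ) + (b : ℂ) * ξ + (m : ℂ) * u + (n : ℂ) * v} := by
  intro φ ξ u v
  have hG : Dense (AddSubgroup.closure {φ ^ 2, 1} : Set ℝ) :=
    dense_addSubgroupClosure_pair_iff.2 (by rw [div_one]; exact irrational_goldenRatio_sq)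
  refine (dense_ofReal_add_ofReal_mul hG exp_pi_mul_I_div_three_im_ne_zero).mono ?_
  rintro _ ⟨x, hx, y, hy, rfl⟩
  obtain ⟨m, n, rfl⟩ := AddSubgroup.mem_closure_pair.1 hx
  obtain ⟨m', n', rfl⟩ := AddSubgroup.mem_closure_pair.1 hy
  -- `φ² = u - ξ` and `φ²ξ = v - ξ + 1`
  refine ⟨n + m', n' - m - m', m, m', ?_⟩
  simp only [zsmul_eq_mul, mul_one, u, v]
  push_cast
  linear_combination (-(m' : ℂ)) * exp_pi_mul_I_div_three_sq
end

section
/- The ℤ²-action R on the torus ℂ/Λ defined by R(k,l)(x) = x + k + l·ξ (translations by elements of ℤ[ξ]) is minimal, i.e., every orbit is dense. -/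
/-!
The orbit of `x` is `x + π(ℤ[ξ])`, where `π : ℂ → ℂ/Λ` is the projection, so it suffices that
`ℤ[ξ] + Λ` is dense in `ℂ`. Since `ξ² = ξ - 1`, the generators `U = φ² + ξ` and `V = ξU = φ²ξ + ξ - 1`
show that `ℤ[ξ] + Λ` contains `A + Aξ` with `A = ℤφ² + ℤ`. As `φ²` is irrational, `A` is dense in `ℝ`,
and `1, ξ` is an `ℝ`-basis of `ℂ`.
-/

open Complex Real

noncomputable def hatXi : ℂ := Complex.exp (Real.pi * Complex.I / 3)
noncomputable def hatPhi : ℝ := (1 + Real.sqrt 5) / 2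
noncomputable def hatU : ℂ := (hatPhi : ℂ) ^ 2 + hatXi
noncomputable def hatV : ℂ := hatXi * hatU
noncomputable def hatLambda : AddSubgroup ℂ := AddSubgroup.closure {hatU, hatV}

theorem QuotientAddGroup.dense_image_mk_of_dense_sup {G : Type*} [AddCommGroup G]
    [TopologicalSpace G] {H N : AddSubgroup G} (h : Dense ((H ⊔ N : AddSubgroup G) : Set G)) :
    Dense (QuotientAddGroup.mk '' (H : Set G) : Set (G ⧸ N)) := by
  refine (mk_surjective.denseRange.dense_image continuous_quotient_mk' h).mono ?_
  rintro _ ⟨_, hx, rfl⟩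
  obtain ⟨y, hy, z, hz, rfl⟩ := AddSubgroup.mem_sup.mp hx
  exact ⟨y, hy, by simpa using (eq_zero_iff z).mpr hz⟩

theorem Complex.dense_image2_ofReal_add_ofReal_mul {w : ℂ} (hw : w.im ≠ 0) {s t : Set ℝ}
    (hs : Dense s) (ht : Dense t) :
    Dense (Set.image2 (fun a b : ℝ => (a : ℂ) + b * w) s t) := by
  rw [← Set.image_prod]
  refine DenseRange.dense_image ?_ (by fun_prop) (hs.prod ht)
  refine Function.Surjective.denseRange fun z => ⟨(z.re - z.im / w.im * w.re, z.im / w.im), ?_⟩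
  apply Complex.ext <;> simp [field]

theorem hatXi_eq : hatXi = 1 / 2 + √3 / 2 * I := by
  rw [hatXi, show (π : ℂ) * I / 3 = ((π / 3 : ℝ) : ℂ) * I by push_cast; ring,
    exp_mul_I, ← ofReal_cos, ← ofReal_sin, cos_pi_div_three, sin_pi_div_three]
  push_cast; ring

theorem hatXi_im_ne_zero : hatXi.im ≠ 0 := by
  simp [hatXi_eq]

theorem hatXi_sq : hatXi ^ 2 = hatXi - 1 := by
  have h3 : ((√3 : ℝ) : ℂ) ^ 2 = 3 := by norm_cast; simp
  rw [hatXi_eq]; linear_combination I ^ 2 / 4 * h3 + 3 / 4 * I_sq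

theorem irrational_hatPhi_sq : Irrational (hatPhi ^ 2) := by
  rw [show hatPhi = goldenRatio from rfl, goldenRatio_sq]
  simpa using goldenRatio_irrational.add_natCast 1

theorem dense_closure_one_hatXi_sup_hatLambda :
    Dense ((AddSubgroup.closure {1, hatXi} ⊔ hatLambda : AddSubgroup ℂ) : Set ℂ) := by
  have hA : Dense (AddSubgroup.closure {hatPhi ^ 2, 1} : Set ℝ) := by
    rw [dense_addSubgroupClosure_pair_iff, div_one]
    exact irrational_hatPhi_sq
  refine (Complex.dense_image2_ofReal_add_ofReal_mul hatXi_im_ne_zero hA hA).mono ?_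
  rintro _ ⟨a, ha, b, hb, rfl⟩
  obtain ⟨i, j, rfl⟩ := AddSubgroup.mem_closure_pair.mp ha
  obtain ⟨i', j', rfl⟩ := AddSubgroup.mem_closure_pair.mp hb
  have hdecomp : (((i • hatPhi ^ 2 + j • 1 : ℝ) : ℂ) + ((i' • hatPhi ^ 2 + j' • 1 : ℝ) : ℂ) * hatXi) =
      ((j + i') • 1 + (j' - i - i') • hatXi) + (i • hatU + i' • hatV) := by
    simp only [zsmul_eq_mul, hatU, hatV]
    push_cast
    linear_combination -(i' : ℂ) * hatXi_sq
  dsimp only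
  rw [hdecomp]
  exact AddSubgroup.add_mem_sup (AddSubgroup.mem_closure_pair.mpr ⟨_, _, rfl⟩)
    (AddSubgroup.mem_closure_pair.mpr ⟨_, _, rfl⟩)

/-- The ℤ²-action by translations by elements of ℤ[ξ] on the torus ℂ/Λ is
minimal: every orbit is dense. -/
theorem hat_action_minimal :
    ∀ x : ℂ ⧸ hatLambda,
      Dense {y : ℂ ⧸ hatLambda | ∃ k l : ℤ,
        y = x + QuotientAddGroup.mk ((k : ℂ) + (l : ℂ) * hatXi)} := by
  intro x
  refine ((QuotientAddGroup.dense_image_mk_of_dense_sup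
    dense_closure_one_hatXi_sup_hatLambda).vadd x).mono ?_
  rintro _ ⟨_, ⟨z, hz, rfl⟩, rfl⟩
  obtain ⟨k, l, rfl⟩ := AddSubgroup.mem_closure_pair.mp hz
  exact ⟨k, l, by simp⟩
end
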